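/- There exist x₀ and t₀ ≥ x₀ - 1 such that for all t ≥ t₀ and all x with x₀ - 1 ≤ x ≤ t: ∂²h(x,t)/∂x² < 0, ∂³h(x,t)/∂x³ > 0, and ∂⁴h(x,t)/∂x⁴ < 0. -/

import Mathlib

open Filter

noncomputable section

/-- `iterLog n` is the `n`-fold iterated natural logarithm, `log^{(0)}(x) = x`. -/
def iterLog : ℕ → ℝ → ℝ
  | 0, x => x
  | n + 1, x => Real.log (iterLog n x)

/-- Condition (A1): `L(x)/x^ε → 0` and `1/(L(x) x^ε) → 0` as `x → ∞`, for every `ε > 0`. -/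
def CondA1 (L : ℝ → ℝ) : Prop :=
  ∀ ε : ℝ, 0 < ε →
    Tendsto (fun x => L x / x ^ ε) atTop (nhds 0) ∧
    Tendsto (fun x => 1 / (L x * x ^ ε)) atTop (nhds 0)

/-- Condition (A2): `L(x ℓ(x))/L(x) → 1` for every positive `ℓ` satisfying (A1). -/
def CondA2 (L : ℝ → ℝ) : Prop :=
  ∀ ℓ : ℝ → ℝ, (∀ x, 0 < ℓ x) → CondA1 ℓ →
    Tendsto (fun x => L (x * ℓ x) / L x) atTop (nhds 1)

/-- The operator `d/d(log x)`, i.e. `g ↦ x g'(x)`. -/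
def logDerivOp (g : ℝ → ℝ) : ℝ → ℝ := fun x => x * deriv g x

/-- Condition (A4): `(d/d log x)^j log L(x^γ) → 0` for every `j ∈ ℕ` and `γ > 0`. -/
def CondA4 (L : ℝ → ℝ) : Prop :=
  ∀ (j : ℕ) (γ : ℝ), 0 < γ →
    Tendsto (logDerivOp^[j] (fun x => Real.log (L (x ^ γ)))) atTop (nhds 0)

/-- `ω_W(y) = (log y / α)^{δ_{n,1}/α} · L(y^{1/α})^{-1/α}`. -/
def omegaW (n : ℕ) (α : ℝ) (L : ℝ → ℝ) (y : ℝ) : ℝ :=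
  (Real.log y / α) ^ ((if n = 1 then (1 : ℝ) else 0) / α) * (L (y ^ (1 / α))) ^ (-(1 / α))

/-- `u_n(t) = (log^{(n-1)} t)^{1/α} · ω_W(log^{(n-1)} t)`. -/
def un (n : ℕ) (α : ℝ) (L : ℝ → ℝ) (t : ℝ) : ℝ :=
  (iterLog (n - 1) t) ^ (1 / α) * omegaW n α L (iterLog (n - 1) t)

section Helpers
open Real Set


lemma eqOn_deriv_of_eqOn {f g : ℝ → ℝ} {s : Set ℝ} (hs : IsOpen s) (h : Set.EqOn f g s) :
    Set.EqOn (deriv f) (deriv g) s := fun x hx =>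
  Filter.EventuallyEq.deriv_eq (Filter.eventuallyEq_of_mem (hs.mem_nhds hx) h)

lemma diffAt_iter {ψ : ℝ → ℝ} {s : Set ℝ} (hs : IsOpen s) (h : ContDiffOn ℝ 4 ψ s) :
    ∀ k : ℕ, k ≤ 3 → ∀ x ∈ s, DifferentiableAt ℝ (deriv^[k] ψ) x := by
  have h1 : ContDiffOn ℝ 3 (deriv ψ) s := h.deriv_of_isOpen hs (by norm_num)
  have h2 : ContDiffOn ℝ 2 (deriv^[2] ψ) s := by
    rw [Function.iterate_succ_apply']
    exact h1.deriv_of_isOpen hs (by norm_num)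
  have h3 : ContDiffOn ℝ 1 (deriv^[3] ψ) s := by
    rw [Function.iterate_succ_apply']
    exact h2.deriv_of_isOpen hs (by norm_num)
  intro k hk x hx
  interval_cases k
  · exact (h.differentiableOn (by norm_num) x hx).differentiableAt (hs.mem_nhds hx)
  · exact (h1.differentiableOn (by norm_num) x hx).differentiableAt (hs.mem_nhds hx)
  · exact (h2.differentiableOn (by norm_num) x hx).differentiableAt (hs.mem_nhds hx)
  · exact (h3.differentiableOn (by norm_num) x hx).differentiableAt (hs.mem_nhds hx)

lemma hasDerivAt_comb {A : ℝ → ℝ} {A' x : ℝ} (hx : x ≠ 0) (k : ℕ)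
    (hA : HasDerivAt A A' (Real.log x)) :
    HasDerivAt (fun y => A (Real.log y) * (y⁻¹)^k)
      ((A' - k * A (Real.log x)) * (x⁻¹)^(k+1)) x := by
  have H1 : HasDerivAt (fun y => A (Real.log y)) (A' * x⁻¹) x :=
    (hA.comp x (Real.hasDerivAt_log hx))
  cases k with
  | zero =>
    simpa using H1.mul_const 1 |>.congr_deriv (by simp [mul_comm])
  | succ m =>
    have H2 : HasDerivAt (fun y : ℝ => (y⁻¹)^(m+1))
        ((m+1) * (x⁻¹)^m * (-(x^2)⁻¹)) x := (hasDerivAt_inv hx).pow (m+1) |>.congr_deriv (by simp)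
    have := H1.mul H2
    refine this.congr_deriv ?_
    have hx2 : (x^2)⁻¹ = x⁻¹ * x⁻¹ := by rw [sq, mul_inv]
    push_cast
    rw [hx2]; ring

lemma comp_log_smooth {r : ℝ → ℝ} {c : ℝ} (hr : ContDiffOn ℝ 4 r (Set.Ioi c)) :
    ContDiffOn ℝ 4 (fun y => r (Real.log y)) (Set.Ioi (Real.exp c)) := by
  apply hr.comp (Real.contDiffOn_log.mono ?_) ?_
  · intro x hx
    simp only [Set.mem_Ioi] at hx
    have : (0:ℝ) < x := lt_trans (Real.exp_pos c) hx
    simp [Set.mem_compl_iff, this.ne']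
  · intro x hx
    simp only [Set.mem_Ioi] at hx ⊢
    have hx0 : (0:ℝ) < x := lt_trans (Real.exp_pos c) hx
    calc c = Real.log (Real.exp c) := (Real.log_exp c).symm
    _ < Real.log x := Real.log_lt_log (Real.exp_pos c) hx

lemma comp_log_derivs {r : ℝ → ℝ} {c : ℝ} (hr : ContDiffOn ℝ 4 r (Set.Ioi c)) :
    Set.EqOn (deriv (fun y => r (Real.log y)))
      (fun y => deriv r (Real.log y) * (y⁻¹)^1) (Set.Ioi (Real.exp c)) ∧
    Set.EqOn (deriv^[2] (fun y => r (Real.log y)))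
      (fun y => (deriv^[2] r (Real.log y) - deriv r (Real.log y)) * (y⁻¹)^2) (Set.Ioi (Real.exp c)) ∧
    Set.EqOn (deriv^[3] (fun y => r (Real.log y)))
      (fun y => (deriv^[3] r (Real.log y) - 3*deriv^[2] r (Real.log y) + 2*deriv r (Real.log y)) * (y⁻¹)^3) (Set.Ioi (Real.exp c)) ∧
    Set.EqOn (deriv^[4] (fun y => r (Real.log y)))
      (fun y => (deriv^[4] r (Real.log y) - 6*deriv^[3] r (Real.log y) + 11*deriv^[2] r (Real.log y) - 6*deriv r (Real.log y)) * (y⁻¹)^4) (Set.Ioi (Real.exp c)) := by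
  have hopen : IsOpen (Set.Ioi (Real.exp c)) := isOpen_Ioi
  have hdiff := diffAt_iter (isOpen_Ioi (a := c)) hr
  have hmem : ∀ x ∈ Set.Ioi (Real.exp c), x ≠ 0 ∧ Real.log x ∈ Set.Ioi c := by
    intro x hx
    simp only [Set.mem_Ioi] at hx ⊢
    have hx0 : (0:ℝ) < x := lt_trans (Real.exp_pos c) hx
    exact ⟨hx0.ne', by
      calc c = Real.log (Real.exp c) := (Real.log_exp c).symm
      _ < Real.log x := Real.log_lt_log (Real.exp_pos c) hx⟩
  -- HasDerivAt for iterated derivs of r at points of Ioi c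
  have hD : ∀ j : ℕ, j ≤ 3 → ∀ u ∈ Set.Ioi c,
      HasDerivAt (deriv^[j] r) (deriv^[j+1] r u) u := by
    intro j hj u hu
    have := (hdiff j hj u hu).hasDerivAt
    rwa [Function.iterate_succ_apply']
  have e1 : Set.EqOn (deriv (fun y => r (Real.log y)))
      (fun y => deriv r (Real.log y) * (y⁻¹)^1) (Set.Ioi (Real.exp c)) := by
    intro x hx
    obtain ⟨hx0, hu⟩ := hmem x hx
    have H := hasDerivAt_comb (A := r) hx0 0 (hD 0 (by norm_num) _ hu)
    simp only [pow_zero, mul_one, Nat.cast_zero, zero_mul, sub_zero, zero_add, pow_one] at H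
    rw [H.deriv]
    simp
  have e2 : Set.EqOn (deriv^[2] (fun y => r (Real.log y)))
      (fun y => (deriv^[2] r (Real.log y) - deriv r (Real.log y)) * (y⁻¹)^2) (Set.Ioi (Real.exp c)) := by
    intro x hx
    obtain ⟨hx0, hu⟩ := hmem x hx
    rw [Function.iterate_succ_apply', Function.iterate_one,
      eqOn_deriv_of_eqOn hopen e1 hx]
    have H := hasDerivAt_comb (A := deriv r) hx0 1 (hD 1 (by norm_num) _ hu)
    rw [H.deriv]
    push_cast; ring_nf
  have e3 : Set.EqOn (deriv^[3] (fun y => r (Real.log y)))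
      (fun y => (deriv^[3] r (Real.log y) - 3*deriv^[2] r (Real.log y) + 2*deriv r (Real.log y)) * (y⁻¹)^3) (Set.Ioi (Real.exp c)) := by
    intro x hx
    obtain ⟨hx0, hu⟩ := hmem x hx
    rw [show (3:ℕ) = 2+1 from rfl, Function.iterate_succ_apply',
      eqOn_deriv_of_eqOn hopen e2 hx]
    have hA : HasDerivAt (fun u => deriv^[2] r u - deriv r u)
        (deriv^[3] r (Real.log x) - deriv^[2] r (Real.log x)) (Real.log x) :=
      ((hD 2 (by norm_num) _ hu).sub (hD 1 (by norm_num) _ hu))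
    have H := hasDerivAt_comb hx0 2 hA
    rw [H.deriv]
    push_cast; ring_nf
  have e4 : Set.EqOn (deriv^[4] (fun y => r (Real.log y)))
      (fun y => (deriv^[4] r (Real.log y) - 6*deriv^[3] r (Real.log y) + 11*deriv^[2] r (Real.log y) - 6*deriv r (Real.log y)) * (y⁻¹)^4) (Set.Ioi (Real.exp c)) := by
    intro x hx
    obtain ⟨hx0, hu⟩ := hmem x hx
    have h4 : deriv^[4] (fun y => r (Real.log y)) x = deriv (deriv^[3] (fun y => r (Real.log y))) x :=
      congrFun (Function.iterate_succ_apply' deriv 3 _) x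
    rw [h4, eqOn_deriv_of_eqOn hopen e3 hx]
    have hA : HasDerivAt (fun u => deriv^[3] r u - 3*deriv^[2] r u + 2*deriv r u)
        (deriv^[4] r (Real.log x) - 3*deriv^[3] r (Real.log x) + 2*deriv^[2] r (Real.log x)) (Real.log x) :=
      (((hD 3 (by norm_num) _ hu).sub ((hD 2 (by norm_num) _ hu).const_mul 3)).add
        ((hD 1 (by norm_num) _ hu).const_mul 2))
    have H := hasDerivAt_comb hx0 3 hA
    rw [H.deriv]
    push_cast; ring_nf
  exact ⟨e1, e2, e3, e4⟩

/-- Alternating-sign property of the first four derivatives on `Ioi a`. -/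
structure AltSign (ψ : ℝ → ℝ) (a : ℝ) : Prop where
  smooth : ContDiffOn ℝ 4 ψ (Set.Ioi a)
  d1 : ∀ x ∈ Set.Ioi a, 0 < deriv ψ x
  d2 : ∀ x ∈ Set.Ioi a, deriv^[2] ψ x < 0
  d3 : ∀ x ∈ Set.Ioi a, 0 < deriv^[3] ψ x
  d4 : ∀ x ∈ Set.Ioi a, deriv^[4] ψ x < 0

lemma altSign_comp_log {ψ : ℝ → ℝ} {a : ℝ} (h : AltSign ψ a) :
    AltSign (fun y => ψ (Real.log y)) (Real.exp a) := by
  obtain ⟨e1, e2, e3, e4⟩ := comp_log_derivs h.smooth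
  have hxpos : ∀ x ∈ Set.Ioi (Real.exp a), 0 < x⁻¹ ∧ Real.log x ∈ Set.Ioi a := by
    intro x hx
    simp only [Set.mem_Ioi] at hx ⊢
    have hx0 : (0:ℝ) < x := lt_trans (Real.exp_pos a) hx
    refine ⟨inv_pos.2 hx0, ?_⟩
    calc a = Real.log (Real.exp a) := (Real.log_exp a).symm
    _ < Real.log x := Real.log_lt_log (Real.exp_pos a) hx
  refine ⟨comp_log_smooth h.smooth, ?_, ?_, ?_, ?_⟩
  · intro x hx
    obtain ⟨hi, hu⟩ := hxpos x hx
    rw [e1 hx]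
    exact mul_pos (h.d1 _ hu) (pow_pos hi 1)
  · intro x hx
    obtain ⟨hi, hu⟩ := hxpos x hx
    rw [e2 hx]
    apply mul_neg_of_neg_of_pos _ (pow_pos hi 2)
    have := h.d2 _ hu; have := h.d1 _ hu; linarith
  · intro x hx
    obtain ⟨hi, hu⟩ := hxpos x hx
    rw [e3 hx]
    apply mul_pos _ (pow_pos hi 3)
    have := h.d3 _ hu; have := h.d2 _ hu; have := h.d1 _ hu; linarith
  · intro x hx
    obtain ⟨hi, hu⟩ := hxpos x hx
    rw [e4 hx]
    apply mul_neg_of_neg_of_pos _ (pow_pos hi 4)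
    have := h.d4 _ hu; have := h.d3 _ hu; have := h.d2 _ hu; have := h.d1 _ hu; linarith


lemma altSign_comp_iterLog {ψ : ℝ → ℝ} {a : ℝ} (h : AltSign ψ a) (m : ℕ) :
    ∃ b : ℝ, AltSign (fun y => ψ (iterLog m y)) b := by
  induction m generalizing ψ a with
  | zero => exact ⟨a, h⟩
  | succ m ih => exact ih (altSign_comp_log h) 

lemma tendsto_iterLog (m : ℕ) : Tendsto (iterLog m) atTop atTop := by
  induction m with
  | zero => exact tendsto_id
  | succ m ih => exact (Real.tendsto_log_atTop.comp ih)


lemma logDerivOp_iter_eqOn {g : ℝ → ℝ} {a : ℝ} (hg : ContDiffOn ℝ 4 g (Set.Ioi a)) :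
    Set.EqOn (logDerivOp^[2] g)
      (fun x => x * deriv g x + x^2 * deriv^[2] g x) (Set.Ioi a) ∧
    Set.EqOn (logDerivOp^[3] g)
      (fun x => x * deriv g x + 3*x^2 * deriv^[2] g x + x^3 * deriv^[3] g x) (Set.Ioi a) ∧
    Set.EqOn (logDerivOp^[4] g)
      (fun x => x * deriv g x + 7*x^2 * deriv^[2] g x + 6*x^3 * deriv^[3] g x
        + x^4 * deriv^[4] g x) (Set.Ioi a) := by
  have hopen : IsOpen (Set.Ioi a) := isOpen_Ioi
  have hdiff := diffAt_iter hopen hg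
  have hD : ∀ j : ℕ, j ≤ 3 → ∀ u ∈ Set.Ioi a,
      HasDerivAt (deriv^[j] g) (deriv^[j+1] g u) u := by
    intro j hj u hu
    have := (hdiff j hj u hu).hasDerivAt
    rwa [Function.iterate_succ_apply']
  have e2 : Set.EqOn (logDerivOp^[2] g)
      (fun x => x * deriv g x + x^2 * deriv^[2] g x) (Set.Ioi a) := by
    intro x hx
    rw [show logDerivOp^[2] g = logDerivOp (logDerivOp^[1] g) from
      Function.iterate_succ_apply' logDerivOp 1 g]
    show x * deriv (fun y => y * deriv g y) x = _
    have H : HasDerivAt (fun y => y * deriv g y)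
        (1 * deriv g x + x * deriv^[2] g x) x :=
      (hasDerivAt_id x).mul (hD 1 (by norm_num) x hx)
    rw [H.deriv]; ring
  have e3 : Set.EqOn (logDerivOp^[3] g)
      (fun x => x * deriv g x + 3*x^2 * deriv^[2] g x + x^3 * deriv^[3] g x) (Set.Ioi a) := by
    intro x hx
    rw [show logDerivOp^[3] g = logDerivOp (logDerivOp^[2] g) from
      Function.iterate_succ_apply' logDerivOp 2 g]
    show x * deriv (logDerivOp^[2] g) x = _
    rw [eqOn_deriv_of_eqOn hopen e2 hx]
    have H : HasDerivAt (fun y => y * deriv g y + y^2 * deriv^[2] g y)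
        ((1 * deriv g x + x * deriv^[2] g x) + (2*x^1 * deriv^[2] g x + x^2 * deriv^[3] g x)) x :=
      ((hasDerivAt_id x).mul (hD 1 (by norm_num) x hx)).add
        (((hasDerivAt_pow 2 x).congr_deriv (by norm_num)).mul (hD 2 (by norm_num) x hx))
    rw [H.deriv]; ring
  have e4 : Set.EqOn (logDerivOp^[4] g)
      (fun x => x * deriv g x + 7*x^2 * deriv^[2] g x + 6*x^3 * deriv^[3] g x
        + x^4 * deriv^[4] g x) (Set.Ioi a) := by
    intro x hx
    rw [show logDerivOp^[4] g = logDerivOp (logDerivOp^[3] g) from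
      Function.iterate_succ_apply' logDerivOp 3 g]
    show x * deriv (logDerivOp^[3] g) x = _
    rw [eqOn_deriv_of_eqOn hopen e3 hx]
    have c2 : HasDerivAt (fun y : ℝ => 3*y^2) (3*(2*x)) x := by
      simpa using (hasDerivAt_pow 2 x).const_mul 3
    have c3 : HasDerivAt (fun y : ℝ => y^3) (3*x^2) x := by
      simpa using hasDerivAt_pow 3 x
    have H : HasDerivAt (fun x => x * deriv g x + 3 * x ^ 2 * deriv^[2] g x + x ^ 3 * deriv^[3] g x)
        (1 * deriv g x + x * deriv^[2] g x + (3 * (2 * x) * deriv^[2] g x + 3 * x ^ 2 * deriv^[3] g x)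
          + (3 * x ^ 2 * deriv^[3] g x + x ^ 3 * deriv^[4] g x)) x :=
      (((hasDerivAt_id x).mul (hD 1 (by norm_num) x hx)).add
        (c2.mul (hD 2 (by norm_num) x hx))).add (c3.mul (hD 3 (by norm_num) x hx))
    rw [H.deriv]; ring
  exact ⟨e2, e3, e4⟩

lemma tendsto_pow_iter_deriv {g : ℝ → ℝ} {a : ℝ} (hg : ContDiffOn ℝ 4 g (Set.Ioi a))
    (h : ∀ j : ℕ, 1 ≤ j → j ≤ 4 → Tendsto (logDerivOp^[j] g) atTop (nhds 0)) :
    ∀ k : ℕ, 1 ≤ k → k ≤ 4 → Tendsto (fun x => x^k * deriv^[k] g x) atTop (nhds 0) := by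
  obtain ⟨e2, e3, e4⟩ := logDerivOp_iter_eqOn hg
  have hmem : Set.Ioi a ∈ atTop := Ioi_mem_atTop a
  have h1 := h 1 le_rfl (by norm_num)
  have h2 := h 2 (by norm_num) (by norm_num)
  have h3 := h 3 (by norm_num) (by norm_num)
  have h4 := h 4 (by norm_num) (by norm_num)
  have T1 : logDerivOp^[1] g = fun x => x * deriv g x := rfl
  rw [T1] at h1
  intro k hk1 hk4
  interval_cases k
  · refine h1.congr (fun x => by simp)
  · have : Tendsto (fun x => logDerivOp^[2] g x - (x * deriv g x)) atTop (nhds 0) := by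
      simpa using h2.sub h1
    refine this.congr' ?_
    filter_upwards [hmem] with x hx
    rw [e2 hx]; ring
  · have : Tendsto (fun x => logDerivOp^[3] g x - 3 * logDerivOp^[2] g x
        + 2 * (x * deriv g x)) atTop (nhds 0) := by
      have := (h3.sub (h2.const_mul 3)).add (h1.const_mul 2)
      simpa using this
    refine this.congr' ?_
    filter_upwards [hmem] with x hx
    rw [e2 hx, e3 hx]; ring
  · have : Tendsto (fun x => logDerivOp^[4] g x - 6 * logDerivOp^[3] g x
        + 11 * logDerivOp^[2] g x - 6 * (x * deriv g x)) atTop (nhds 0) := by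
      have := ((h4.sub (h3.const_mul 6)).add (h2.const_mul 11)).sub (h1.const_mul 6)
      simpa using this
    refine this.congr' ?_
    filter_upwards [hmem] with x hx
    rw [e2 hx, e3 hx, e4 hx]; ring

lemma eqOn_iter_deriv_add {F G : ℝ → ℝ} {s : Set ℝ} (hs : IsOpen s)
    (hF : ContDiffOn ℝ 4 F s) (hG : ContDiffOn ℝ 4 G s) (c : ℝ) :
    ∀ k : ℕ, k ≤ 4 → Set.EqOn (deriv^[k] (fun y => F y + c * G y))
      (fun y => deriv^[k] F y + c * deriv^[k] G y) s := by
  have hDF : ∀ j : ℕ, j ≤ 3 → ∀ u ∈ s, HasDerivAt (deriv^[j] F) (deriv^[j+1] F u) u := by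
    intro j hj u hu
    have := (diffAt_iter hs hF j hj u hu).hasDerivAt
    rwa [Function.iterate_succ_apply']
  have hDG : ∀ j : ℕ, j ≤ 3 → ∀ u ∈ s, HasDerivAt (deriv^[j] G) (deriv^[j+1] G u) u := by
    intro j hj u hu
    have := (diffAt_iter hs hG j hj u hu).hasDerivAt
    rwa [Function.iterate_succ_apply']
  intro k hk
  induction k with
  | zero => intro x _; simp
  | succ m ih =>
    have hm : m ≤ 3 := by omega
    intro x hx
    rw [show deriv^[m+1] (fun y => F y + c * G y)
        = deriv (deriv^[m] (fun y => F y + c * G y)) from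
      Function.iterate_succ_apply' deriv m _]
    rw [eqOn_deriv_of_eqOn hs (ih (by omega)) hx]
    have H : HasDerivAt (fun y => deriv^[m] F y + c * deriv^[m] G y)
        (deriv^[m+1] F x + c * deriv^[m+1] G x) x :=
      (hDF m hm x hx).add ((hDG m hm x hx).const_mul c)
    rw [H.deriv]

lemma rfun_props (c₀ a₁ a₂ α : ℝ) (hα : 0 < α) :
    ContDiffOn ℝ 4 (fun u => c₀ + a₁ * u + a₂ * Real.log (u / α)) (Set.Ioi 0) ∧
    Set.EqOn (deriv (fun u => c₀ + a₁ * u + a₂ * Real.log (u / α)))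
      (fun u => a₁ + a₂ * u⁻¹) (Set.Ioi 0) ∧
    Set.EqOn (deriv^[2] (fun u => c₀ + a₁ * u + a₂ * Real.log (u / α)))
      (fun u => -a₂ * (u⁻¹)^2) (Set.Ioi 0) ∧
    Set.EqOn (deriv^[3] (fun u => c₀ + a₁ * u + a₂ * Real.log (u / α)))
      (fun u => 2*a₂ * (u⁻¹)^3) (Set.Ioi 0) ∧
    Set.EqOn (deriv^[4] (fun u => c₀ + a₁ * u + a₂ * Real.log (u / α)))
      (fun u => -6*a₂ * (u⁻¹)^4) (Set.Ioi 0) := by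
  have hopen : IsOpen (Set.Ioi (0:ℝ)) := isOpen_Ioi
  have hsm : ContDiffOn ℝ 4 (fun u => c₀ + a₁ * u + a₂ * Real.log (u / α)) (Set.Ioi 0) := by
    have hlog : ContDiffOn ℝ 4 (fun u : ℝ => Real.log (u / α)) (Set.Ioi 0) := by
      apply Real.contDiffOn_log.comp ((contDiff_id.div_const α).contDiffOn)
      intro u hu
      simp only [Set.mem_Ioi] at hu
      simp only [Set.mem_compl_iff, Set.mem_singleton_iff, id_eq]
      positivity
    exact (contDiffOn_const.add (contDiffOn_id.const_smul a₁)).add (hlog.const_smul a₂)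
  have e1 : Set.EqOn (deriv (fun u => c₀ + a₁ * u + a₂ * Real.log (u / α)))
      (fun u => a₁ + a₂ * u⁻¹) (Set.Ioi 0) := by
    intro u hu
    have hu0 : (0:ℝ) < u := hu
    have hd : HasDerivAt (fun u : ℝ => Real.log (u / α)) (u⁻¹) u := by
      have h1 : HasDerivAt (fun u : ℝ => u / α) (1/α) u := (hasDerivAt_id u).div_const α
      have h2 := (Real.hasDerivAt_log (by positivity : u/α ≠ 0)).comp u h1
      refine h2.congr_deriv ?_
      rw [inv_div]; field_simp
    have H : HasDerivAt (fun u => c₀ + a₁ * u + a₂ * Real.log (u / α))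
        (0 + a₁ * 1 + a₂ * u⁻¹) u :=
      ((hasDerivAt_const u c₀).add ((hasDerivAt_id u).const_mul a₁)).add (hd.const_mul a₂)
    rw [H.deriv]; ring
  have e2 : Set.EqOn (deriv^[2] (fun u => c₀ + a₁ * u + a₂ * Real.log (u / α)))
      (fun u => -a₂ * (u⁻¹)^2) (Set.Ioi 0) := by
    intro u hu
    have hu0 : u ≠ 0 := (Set.mem_Ioi.1 hu).ne'
    rw [show deriv^[2] (fun u => c₀ + a₁ * u + a₂ * Real.log (u / α))
        = deriv (deriv (fun u => c₀ + a₁ * u + a₂ * Real.log (u / α))) from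
      Function.iterate_succ_apply' deriv 1 _]
    rw [eqOn_deriv_of_eqOn hopen e1 hu]
    have H : HasDerivAt (fun u : ℝ => a₁ + a₂ * u⁻¹) (0 + a₂ * (-(u^2)⁻¹)) u :=
      (hasDerivAt_const u a₁).add ((hasDerivAt_inv hu0).const_mul a₂)
    rw [H.deriv, ← inv_pow]; ring
  have e3 : Set.EqOn (deriv^[3] (fun u => c₀ + a₁ * u + a₂ * Real.log (u / α)))
      (fun u => 2*a₂ * (u⁻¹)^3) (Set.Ioi 0) := by
    intro u hu
    have hu0 : u ≠ 0 := (Set.mem_Ioi.1 hu).ne'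
    rw [show deriv^[3] (fun u => c₀ + a₁ * u + a₂ * Real.log (u / α))
        = deriv (deriv^[2] (fun u => c₀ + a₁ * u + a₂ * Real.log (u / α))) from
      Function.iterate_succ_apply' deriv 2 _]
    rw [eqOn_deriv_of_eqOn hopen e2 hu]
    have H : HasDerivAt (fun u : ℝ => -a₂ * (u⁻¹)^2)
        (-a₂ * (2 * (u⁻¹)^1 * (-(u^2)⁻¹))) u :=
      (((hasDerivAt_inv hu0).pow 2).const_mul (-a₂)).congr_deriv (by push_cast; ring)
    rw [H.deriv, ← inv_pow]; ring
  have e4 : Set.EqOn (deriv^[4] (fun u => c₀ + a₁ * u + a₂ * Real.log (u / α)))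
      (fun u => -6*a₂ * (u⁻¹)^4) (Set.Ioi 0) := by
    intro u hu
    have hu0 : u ≠ 0 := (Set.mem_Ioi.1 hu).ne'
    rw [show deriv^[4] (fun u => c₀ + a₁ * u + a₂ * Real.log (u / α))
        = deriv (deriv^[3] (fun u => c₀ + a₁ * u + a₂ * Real.log (u / α))) from
      Function.iterate_succ_apply' deriv 3 _]
    rw [eqOn_deriv_of_eqOn hopen e3 hu]
    have H : HasDerivAt (fun u : ℝ => 2*a₂ * (u⁻¹)^3)
        (2*a₂ * (3 * (u⁻¹)^2 * (-(u^2)⁻¹))) u :=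
      (((hasDerivAt_inv hu0).pow 3).const_mul (2*a₂)).congr_deriv (by push_cast; ring)
    rw [H.deriv, ← inv_pow]; ring
  exact ⟨hsm, e1, e2, e3, e4⟩

set_option maxHeartbeats 2000000 in
lemma altSign_base (α c₀ a₂ : ℝ) (hα : 0 < α) (f : ℝ → ℝ) (bf : ℝ)
    (hf : ContDiffOn ℝ 4 f (Set.Ioi bf))
    (hfT : ∀ j : ℕ, 1 ≤ j → j ≤ 4 → Tendsto (logDerivOp^[j] f) atTop (nhds 0)) :
    ∃ b : ℝ, AltSign (fun y =>
      (c₀ + (1/α) * Real.log y + a₂ * Real.log (Real.log y / α)) + (-(1/α)) * f y) b := by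
  obtain ⟨hrsm, r1, r2, r3, r4⟩ := rfun_props c₀ (1/α) a₂ α hα
  set r : ℝ → ℝ := fun u => c₀ + (1/α) * u + a₂ * Real.log (u / α) with hrdef
  show ∃ b : ℝ, AltSign (fun y => r (Real.log y) + (-(1/α)) * f y) b
  have hFsm : ContDiffOn ℝ 4 (fun y => r (Real.log y)) (Set.Ioi (Real.exp 0)) :=
    comp_log_smooth hrsm
  obtain ⟨E1, E2, E3, E4⟩ := comp_log_derivs hrsm
  set b0 : ℝ := max (max (Real.exp 0) bf) 1 with hb0
  have hs : IsOpen (Set.Ioi b0) := isOpen_Ioi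
  have hsub1 : Set.Ioi b0 ⊆ Set.Ioi (Real.exp 0) :=
    Set.Ioi_subset_Ioi (le_trans (le_max_left _ _) (le_max_left _ _))
  have hFs : ContDiffOn ℝ 4 (fun y => r (Real.log y)) (Set.Ioi b0) := hFsm.mono hsub1
  have hGs : ContDiffOn ℝ 4 f (Set.Ioi b0) :=
    hf.mono (Set.Ioi_subset_Ioi (le_trans (le_max_right _ _) (le_max_left _ _)))
  have φk : ∀ k : ℕ, k ≤ 4 → Set.EqOn
      (deriv^[k] (fun y => r (Real.log y) + (-(1/α)) * f y))
      (fun y => deriv^[k] (fun y => r (Real.log y)) y + (-(1/α)) * deriv^[k] f y)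
      (Set.Ioi b0) := eqOn_iter_deriv_add hs hFs hGs (-(1/α))
  have Ak := tendsto_pow_iter_deriv hf hfT
  have l1 : Tendsto (fun y : ℝ => (Real.log y)⁻¹) atTop (nhds 0) :=
    tendsto_inv_atTop_zero.comp Real.tendsto_log_atTop
  -- membership facts
  have hmem : ∀ y ∈ Set.Ioi b0, y ≠ 0 ∧ (0:ℝ) < y ∧ y ∈ Set.Ioi (Real.exp 0)
      ∧ Real.log y ∈ Set.Ioi (0:ℝ) := by
    intro y hy
    have hy1 : (1:ℝ) < y := lt_of_le_of_lt (le_max_right _ _) hy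
    have hy0 : (0:ℝ) < y := lt_trans one_pos hy1
    exact ⟨hy0.ne', hy0, hsub1 hy, Set.mem_Ioi.2 (Real.log_pos hy1)⟩
  -- pointwise formulas for y^k * deriv^[k] φ
  have P1 : ∀ y ∈ Set.Ioi b0,
      y * deriv (fun y => r (Real.log y) + (-(1/α)) * f y) y
      = (1/α + a₂ * (Real.log y)⁻¹) + (-(1/α)) * (y * deriv f y) := by
    intro y hy
    obtain ⟨hy0, hyp, hyE, hyl⟩ := hmem y hy
    have φ1 : deriv (fun y => r (Real.log y) + (-(1/α)) * f y) y
        = deriv (fun y => r (Real.log y)) y + (-(1/α)) * deriv f y := φk 1 (by norm_num) hy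
    rw [φ1, E1 hyE]
    simp only []
    rw [r1 hyl]
    field_simp
  have P2 : ∀ y ∈ Set.Ioi b0,
      y^2 * deriv^[2] (fun y => r (Real.log y) + (-(1/α)) * f y) y
      = (-a₂ * ((Real.log y)⁻¹)^2 - (1/α + a₂ * (Real.log y)⁻¹))
        + (-(1/α)) * (y^2 * deriv^[2] f y) := by
    intro y hy
    obtain ⟨hy0, hyp, hyE, hyl⟩ := hmem y hy
    rw [show deriv^[2] (fun y => r (Real.log y) + (-(1/α)) * f y) y
        = deriv^[2] (fun y => r (Real.log y)) y + (-(1/α)) * deriv^[2] f y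
      from φk 2 (by norm_num) hy, E2 hyE]
    simp only []
    rw [r2 hyl, r1 hyl]
    field_simp
  have P3 : ∀ y ∈ Set.Ioi b0,
      y^3 * deriv^[3] (fun y => r (Real.log y) + (-(1/α)) * f y) y
      = (2*a₂ * ((Real.log y)⁻¹)^3 - 3*(-a₂ * ((Real.log y)⁻¹)^2)
          + 2*(1/α + a₂ * (Real.log y)⁻¹))
        + (-(1/α)) * (y^3 * deriv^[3] f y) := by
    intro y hy
    obtain ⟨hy0, hyp, hyE, hyl⟩ := hmem y hy
    rw [show deriv^[3] (fun y => r (Real.log y) + (-(1/α)) * f y) y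
        = deriv^[3] (fun y => r (Real.log y)) y + (-(1/α)) * deriv^[3] f y
      from φk 3 (by norm_num) hy, E3 hyE]
    simp only []
    rw [r3 hyl, r2 hyl, r1 hyl]
    field_simp
  have P4 : ∀ y ∈ Set.Ioi b0,
      y^4 * deriv^[4] (fun y => r (Real.log y) + (-(1/α)) * f y) y
      = (-6*a₂ * ((Real.log y)⁻¹)^4 - 6*(2*a₂ * ((Real.log y)⁻¹)^3)
          + 11*(-a₂ * ((Real.log y)⁻¹)^2) - 6*(1/α + a₂ * (Real.log y)⁻¹))
        + (-(1/α)) * (y^4 * deriv^[4] f y) := by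
    intro y hy
    obtain ⟨hy0, hyp, hyE, hyl⟩ := hmem y hy
    rw [show deriv^[4] (fun y => r (Real.log y) + (-(1/α)) * f y) y
        = deriv^[4] (fun y => r (Real.log y)) y + (-(1/α)) * deriv^[4] f y
      from φk 4 (by norm_num) hy, E4 hyE]
    simp only []
    rw [r4 hyl, r3 hyl, r2 hyl, r1 hyl]
    field_simp
  -- tendsto of the right-hand sides
  have hc : Tendsto (fun _ : ℝ => 1/α) atTop (nhds (1/α)) := tendsto_const_nhds
  have hS1 : Tendsto (fun y => (1/α + a₂ * (Real.log y)⁻¹) + (-(1/α)) * (y * deriv f y))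
      atTop (nhds (1/α)) := by
    have hA1 : Tendsto (fun y => y * deriv f y) atTop (nhds 0) := by
      have := Ak 1 le_rfl (by norm_num)
      refine this.congr (fun y => by simp)
    have := (hc.add (l1.const_mul a₂)).add (hA1.const_mul (-(1/α)))
    simpa using this
  have hS2 : Tendsto (fun y => (-a₂ * ((Real.log y)⁻¹)^2 - (1/α + a₂ * (Real.log y)⁻¹))
      + (-(1/α)) * (y^2 * deriv^[2] f y)) atTop (nhds (-(1/α))) := by
    have := (((l1.pow 2).const_mul (-a₂)).sub
        (hc.add (l1.const_mul a₂))).add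
        ((Ak 2 (by norm_num) (by norm_num)).const_mul (-(1/α)))
    simpa using this
  have hS3 : Tendsto (fun y => (2*a₂ * ((Real.log y)⁻¹)^3 - 3*(-a₂ * ((Real.log y)⁻¹)^2)
      + 2*(1/α + a₂ * (Real.log y)⁻¹)) + (-(1/α)) * (y^3 * deriv^[3] f y))
      atTop (nhds (2*(1/α))) := by
    have := ((((l1.pow 3).const_mul (2*a₂)).sub
        (((l1.pow 2).const_mul (-a₂)).const_mul 3)).add
        ((hc.add (l1.const_mul a₂)).const_mul 2)).add
        ((Ak 3 (by norm_num) (by norm_num)).const_mul (-(1/α)))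
    simpa using this
  have hS4 : Tendsto (fun y => (-6*a₂ * ((Real.log y)⁻¹)^4 - 6*(2*a₂ * ((Real.log y)⁻¹)^3)
      + 11*(-a₂ * ((Real.log y)⁻¹)^2) - 6*(1/α + a₂ * (Real.log y)⁻¹))
      + (-(1/α)) * (y^4 * deriv^[4] f y)) atTop (nhds (-(6*(1/α)))) := by
    have := (((((l1.pow 4).const_mul (-6*a₂)).sub
        (((l1.pow 3).const_mul (2*a₂)).const_mul 6)).add
        (((l1.pow 2).const_mul (-a₂)).const_mul 11)).sub
        ((hc.add (l1.const_mul a₂)).const_mul 6)).add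
        ((Ak 4 (by norm_num) (by norm_num)).const_mul (-(1/α)))
    simpa using this
  -- transfer to the actual derivatives
  have hmem' : Set.Ioi b0 ∈ atTop := Ioi_mem_atTop b0
  have T1 : Tendsto (fun y => y * deriv (fun y => r (Real.log y) + (-(1/α)) * f y) y)
      atTop (nhds (1/α)) :=
    Tendsto.congr' (by filter_upwards [hmem'] with y hy; exact (P1 y hy).symm) hS1
  have T2 : Tendsto (fun y => y^2 * deriv^[2] (fun y => r (Real.log y) + (-(1/α)) * f y) y)
      atTop (nhds (-(1/α))) :=
    Tendsto.congr' (by filter_upwards [hmem'] with y hy; exact (P2 y hy).symm) hS2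
  have T3 : Tendsto (fun y => y^3 * deriv^[3] (fun y => r (Real.log y) + (-(1/α)) * f y) y)
      atTop (nhds (2*(1/α))) :=
    Tendsto.congr' (by filter_upwards [hmem'] with y hy; exact (P3 y hy).symm) hS3
  have T4 : Tendsto (fun y => y^4 * deriv^[4] (fun y => r (Real.log y) + (-(1/α)) * f y) y)
      atTop (nhds (-(6*(1/α))))  :=
    Tendsto.congr' (by filter_upwards [hmem'] with y hy; exact (P4 y hy).symm) hS4
  -- eventual signs
  have s1 := T1.eventually (eventually_gt_nhds (by positivity : (0:ℝ) < 1/α))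
  have s2 := T2.eventually (eventually_lt_nhds (by
    have : (0:ℝ) < 1/α := by positivity
    linarith : -(1/α) < (0:ℝ)))
  have s3 := T3.eventually (eventually_gt_nhds (by positivity : (0:ℝ) < 2*(1/α)))
  have s4 := T4.eventually (eventually_lt_nhds (by
    have : (0:ℝ) < 6*(1/α) := by positivity
    linarith : -(6*(1/α)) < (0:ℝ)))
  obtain ⟨b1, hb1⟩ := eventually_atTop.1 s1
  obtain ⟨b2, hb2⟩ := eventually_atTop.1 s2
  obtain ⟨b3, hb3⟩ := eventually_atTop.1 s3
  obtain ⟨b4, hb4⟩ := eventually_atTop.1 s4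
  refine ⟨max (max (max b1 b2) (max b3 b4)) b0, ?_, ?_, ?_, ?_, ?_⟩
  · exact (hFs.add (hGs.const_smul (-(1/α)))).mono (Set.Ioi_subset_Ioi (le_max_right _ _))
  · intro x hx
    have hx0 : x ∈ Set.Ioi b0 := Set.Ioi_subset_Ioi (le_max_right _ _) hx
    obtain ⟨_, hxp, _, _⟩ := hmem x hx0
    have hxlt := Set.mem_Ioi.1 hx
    simp only [max_lt_iff] at hxlt
    have h1 := hb1 x hxlt.1.1.1.le
    nlinarith
  · intro x hx
    have hx0 : x ∈ Set.Ioi b0 := Set.Ioi_subset_Ioi (le_max_right _ _) hx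
    obtain ⟨_, hxp, _, _⟩ := hmem x hx0
    have hxlt := Set.mem_Ioi.1 hx
    simp only [max_lt_iff] at hxlt
    have h2 := hb2 x hxlt.1.1.2.le
    nlinarith [pow_pos hxp 2]
  · intro x hx
    have hx0 : x ∈ Set.Ioi b0 := Set.Ioi_subset_Ioi (le_max_right _ _) hx
    obtain ⟨_, hxp, _, _⟩ := hmem x hx0
    have hxlt := Set.mem_Ioi.1 hx
    simp only [max_lt_iff] at hxlt
    have h3 := hb3 x hxlt.1.2.1.le
    nlinarith [pow_pos hxp 3]
  · intro x hx
    have hx0 : x ∈ Set.Ioi b0 := Set.Ioi_subset_Ioi (le_max_right _ _) hx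
    obtain ⟨_, hxp, _, _⟩ := hmem x hx0
    have hxlt := Set.mem_Ioi.1 hx
    simp only [max_lt_iff] at hxlt
    have h4 := hb4 x hxlt.1.2.2.le
    nlinarith [pow_pos hxp 4]

lemma eqOn_iter_deriv_of_eqOn {f g : ℝ → ℝ} {s : Set ℝ} (hs : IsOpen s)
    (h : Set.EqOn f g s) (k : ℕ) : Set.EqOn (deriv^[k] f) (deriv^[k] g) s := by
  induction k with
  | zero => exact h
  | succ m ih =>
    rw [show deriv^[m+1] f = deriv (deriv^[m] f) from Function.iterate_succ_apply' deriv m f,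
      show deriv^[m+1] g = deriv (deriv^[m] g) from Function.iterate_succ_apply' deriv m g]
    exact eqOn_deriv_of_eqOn hs ih

lemma prod_derivs {ψ : ℝ → ℝ} {s : Set ℝ} (hs : IsOpen s) (hψ : ContDiffOn ℝ 4 ψ s) (t : ℝ) :
    Set.EqOn (deriv^[2] (fun y => (t - y) * ψ y))
      (fun y => (t - y) * deriv^[2] ψ y - 2 * deriv ψ y) s ∧
    Set.EqOn (deriv^[3] (fun y => (t - y) * ψ y))
      (fun y => (t - y) * deriv^[3] ψ y - 3 * deriv^[2] ψ y) s ∧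
    Set.EqOn (deriv^[4] (fun y => (t - y) * ψ y))
      (fun y => (t - y) * deriv^[4] ψ y - 4 * deriv^[3] ψ y) s := by
  have hD : ∀ j : ℕ, j ≤ 3 → ∀ u ∈ s, HasDerivAt (deriv^[j] ψ) (deriv^[j+1] ψ u) u := by
    intro j hj u hu
    have := (diffAt_iter hs hψ j hj u hu).hasDerivAt
    rwa [Function.iterate_succ_apply']
  have hlin : ∀ x : ℝ, HasDerivAt (fun y : ℝ => t - y) (-1) x := by
    intro x
    simpa using (hasDerivAt_id x).const_sub t
  have e1 : Set.EqOn (deriv (fun y => (t - y) * ψ y))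
      (fun y => (t - y) * deriv ψ y - ψ y) s := by
    intro x hx
    have H : HasDerivAt (fun y => (t - y) * ψ y)
        ((-1) * ψ x + (t - x) * deriv ψ x) x := (hlin x).mul (hD 0 (by norm_num) x hx)
    rw [H.deriv]; ring
  have e2 : Set.EqOn (deriv^[2] (fun y => (t - y) * ψ y))
      (fun y => (t - y) * deriv^[2] ψ y - 2 * deriv ψ y) s := by
    intro x hx
    rw [show deriv^[2] (fun y => (t - y) * ψ y) = deriv (deriv (fun y => (t - y) * ψ y)) from
      Function.iterate_succ_apply' deriv 1 _, eqOn_deriv_of_eqOn hs e1 hx]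
    have H : HasDerivAt (fun y => (t - y) * deriv ψ y - ψ y)
        (((-1) * deriv ψ x + (t - x) * deriv^[2] ψ x) - deriv ψ x) x :=
      ((hlin x).mul (hD 1 (by norm_num) x hx)).sub (hD 0 (by norm_num) x hx)
    rw [H.deriv]; ring
  have e3 : Set.EqOn (deriv^[3] (fun y => (t - y) * ψ y))
      (fun y => (t - y) * deriv^[3] ψ y - 3 * deriv^[2] ψ y) s := by
    intro x hx
    rw [show deriv^[3] (fun y => (t - y) * ψ y) = deriv (deriv^[2] (fun y => (t - y) * ψ y)) from
      Function.iterate_succ_apply' deriv 2 _, eqOn_deriv_of_eqOn hs e2 hx]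
    have H : HasDerivAt (fun y => (t - y) * deriv^[2] ψ y - 2 * deriv ψ y)
        (((-1) * deriv^[2] ψ x + (t - x) * deriv^[3] ψ x) - 2 * deriv^[2] ψ x) x :=
      ((hlin x).mul (hD 2 (by norm_num) x hx)).sub ((hD 1 (by norm_num) x hx).const_mul 2)
    rw [H.deriv]; ring
  have e4 : Set.EqOn (deriv^[4] (fun y => (t - y) * ψ y))
      (fun y => (t - y) * deriv^[4] ψ y - 4 * deriv^[3] ψ y) s := by
    intro x hx
    rw [show deriv^[4] (fun y => (t - y) * ψ y) = deriv (deriv^[3] (fun y => (t - y) * ψ y)) from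
      Function.iterate_succ_apply' deriv 3 _, eqOn_deriv_of_eqOn hs e3 hx]
    have H : HasDerivAt (fun y => (t - y) * deriv^[3] ψ y - 3 * deriv^[2] ψ y)
        (((-1) * deriv^[3] ψ x + (t - x) * deriv^[4] ψ x) - 3 * deriv^[3] ψ x) x :=
      ((hlin x).mul (hD 3 (by norm_num) x hx)).sub ((hD 2 (by norm_num) x hx).const_mul 3)
    rw [H.deriv]; ring
  exact ⟨e2, e3, e4⟩

lemma rpow_gt {α M y : ℝ} (hα : 0 < α) (hy : max M 1 ^ α < y) : M < y ^ (1/α) := by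
  have hM1 : (1:ℝ) ≤ max M 1 := le_max_right M 1
  have hb : (0:ℝ) < max M 1 ^ α := Real.rpow_pos_of_pos (by linarith) α
  have hy0 : (0:ℝ) < y := lt_trans hb hy
  have h2 : (max M 1 ^ α) ^ (1/α) < y ^ (1/α) :=
    Real.rpow_lt_rpow hb.le hy (by positivity)
  rw [← Real.rpow_mul (by linarith : (0:ℝ) ≤ max M 1), mul_one_div_cancel hα.ne',
    Real.rpow_one] at h2
  exact lt_of_le_of_lt (le_max_left M 1) h2

lemma f_smooth {L : ℝ → ℝ} {α : ℝ} (hα : 0 < α) (x₁ x₂ : ℝ)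
    (hL : ContDiffOn ℝ 4 L (Set.Ioi x₁)) (hLp : ∀ x ≥ x₂, 0 < L x) :
    ContDiffOn ℝ 4 (fun y => Real.log (L (y ^ (1/α))))
      (Set.Ioi (max (max (max x₁ x₂) 1 ^ α) 1)) := by
  intro y hy
  have hy' : max (max x₁ x₂) 1 ^ α < y := lt_of_le_of_lt (le_max_left _ _) hy
  have hy1 : (1:ℝ) < y := lt_of_le_of_lt (le_max_right _ _) hy
  have hy0 : (0:ℝ) < y := lt_trans one_pos hy1
  have hz : max x₁ x₂ < y ^ (1/α) := rpow_gt hα hy'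
  have hz1 : x₁ < y ^ (1/α) := lt_of_le_of_lt (le_max_left _ _) hz
  have hz2 : x₂ < y ^ (1/α) := lt_of_le_of_lt (le_max_right _ _) hz
  have h1 : ContDiffAt ℝ 4 (fun y : ℝ => y ^ (1/α)) y :=
    Real.contDiffAt_rpow_const_of_ne hy0.ne'
  have h2 : ContDiffAt ℝ 4 L (y ^ (1/α)) := hL.contDiffAt (Ioi_mem_nhds hz1)
  have h3 : ContDiffAt ℝ 4 Real.log (L (y ^ (1/α))) :=
    Real.contDiffAt_log.mpr (hLp _ hz2.le).ne'
  exact ((h3.comp y (h2.comp y h1))).contDiffWithinAt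

lemma val_eq {L : ℝ → ℝ} {α β : ℝ} (hα : 0 < α) (hβ : β < 1) (n : ℕ)
    (z : ℝ) (hz : 1 < z) (hLz : 0 < L (z ^ (1/α))) :
    Real.log ((1 - β) * (z ^ (1/α) * ((Real.log z / α) ^ ((if n = 1 then (1:ℝ) else 0) / α)
        * (L (z ^ (1 / α))) ^ (-(1 / α)))))
      = (Real.log (1-β) + (1/α) * Real.log z
          + ((if n = 1 then (1:ℝ) else 0)/α) * Real.log (Real.log z / α))
        + (-(1/α)) * Real.log (L (z ^ (1/α))) := by
  have hz0 : (0:ℝ) < z := lt_trans one_pos hz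
  have hlz : 0 < Real.log z := Real.log_pos hz
  have hlza : 0 < Real.log z / α := by positivity
  have h1 : 0 < z ^ (1/α) := Real.rpow_pos_of_pos hz0 _
  have h2 : (0:ℝ) < (Real.log z / α) ^ ((if n = 1 then (1:ℝ) else 0)/α) :=
    Real.rpow_pos_of_pos hlza _
  have h3 : 0 < (L (z ^ (1/α))) ^ (-(1/α)) := Real.rpow_pos_of_pos hLz _
  rw [Real.log_mul (by linarith : (1:ℝ) - β ≠ 0) (by positivity),
      Real.log_mul h1.ne' (by positivity), Real.log_mul h2.ne' h3.ne',
      Real.log_rpow hz0, Real.log_rpow hlza, Real.log_rpow hLz]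
  ring

lemma AltSign.congr {ψ G : ℝ → ℝ} {a b : ℝ} (h : AltSign ψ a) (hb : a ≤ b)
    (he : Set.EqOn G ψ (Set.Ioi b)) : AltSign G b := by
  have hs : IsOpen (Set.Ioi b) := isOpen_Ioi
  have hsub : Set.Ioi b ⊆ Set.Ioi a := Set.Ioi_subset_Ioi hb
  refine ⟨(h.smooth.mono hsub).congr he, ?_, ?_, ?_, ?_⟩
  · intro x hx
    rw [show deriv G x = deriv ψ x from eqOn_iter_deriv_of_eqOn hs he 1 hx]
    exact h.d1 x (hsub hx)
  · intro x hx
    rw [eqOn_iter_deriv_of_eqOn hs he 2 hx]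
    exact h.d2 x (hsub hx)
  · intro x hx
    rw [eqOn_iter_deriv_of_eqOn hs he 3 hx]
    exact h.d3 x (hsub hx)
  · intro x hx
    rw [eqOn_iter_deriv_of_eqOn hs he 4 hx]
    exact h.d4 x (hsub hx)


end Helpers

/-- **Lemma.** With `h(x,t) = (t - x) log((1-β) u_n(x))`, there exist `x₀` and `t₀ ≥ x₀ - 1`
such that for all `t ≥ t₀` and all `x₀ - 1 ≤ x ≤ t`, the second `x`-derivative of `h` is
negative, the third is positive, and the fourth is negative. -/
theorem stmt_13 (n : ℕ) (hn : 1 ≤ n) (α : ℝ) (hα : 0 < α)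
    (L : ℝ → ℝ) (hLpos : ∀ᶠ x in atTop, 0 < L x)
    (hLsmooth : ∃ x₁ : ℝ, ContDiffOn ℝ 4 L (Set.Ioi x₁))
    (hA1 : CondA1 L) (hA2 : CondA2 L) (hA4 : CondA4 L)
    (β : ℝ) (hβ0 : 0 < β) (hβ1 : β < 1)
    (h : ℝ → ℝ → ℝ)
    (hDef : ∀ x t : ℝ, h x t = (t - x) * Real.log ((1 - β) * un n α L x)) :
    ∃ x₀ t₀ : ℝ, x₀ - 1 ≤ t₀ ∧ ∀ t : ℝ, t₀ ≤ t → ∀ x : ℝ, x₀ - 1 ≤ x → x ≤ t →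
      iteratedDeriv 2 (fun y => h y t) x < 0 ∧
      0 < iteratedDeriv 3 (fun y => h y t) x ∧
      iteratedDeriv 4 (fun y => h y t) x < 0 := by
  have hAlt : ∃ b : ℝ, AltSign (fun y => Real.log ((1 - β) * un n α L y)) b := by
    obtain ⟨x₁, hL⟩ := hLsmooth
    obtain ⟨x₂, hLp⟩ := eventually_atTop.1 hLpos
    have hf := f_smooth hα x₁ x₂ hL hLp
    have hfT : ∀ j : ℕ, 1 ≤ j → j ≤ 4 →
        Tendsto (logDerivOp^[j] (fun y => Real.log (L (y ^ (1/α))))) atTop (nhds 0) :=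
      fun j _ _ => hA4 j (1/α) (by positivity)
    obtain ⟨bφ, hAS⟩ := altSign_base α (Real.log (1-β)) ((if n = 1 then (1:ℝ) else 0)/α) hα
      (fun y => Real.log (L (y ^ (1/α)))) _ hf hfT
    obtain ⟨bψ, hψ⟩ := altSign_comp_iterLog hAS (n-1)
    obtain ⟨B, hB⟩ := eventually_atTop.1
      ((tendsto_iterLog (n-1)).eventually (eventually_gt_atTop (max (max x₂ 1 ^ α) 1)))
    refine ⟨max B bψ, hψ.congr (le_max_right _ _) ?_⟩
    intro y hy
    have hz := hB y (le_of_lt (lt_of_le_of_lt (le_max_left _ _) hy))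
    have hz1 : 1 < iterLog (n-1) y := lt_of_le_of_lt (le_max_right _ _) hz
    have hzL : 0 < L ((iterLog (n-1) y) ^ (1/α)) :=
      hLp _ (rpow_gt hα (lt_of_le_of_lt (le_max_left _ _) hz)).le
    exact val_eq hα hβ1 n _ hz1 hzL
  obtain ⟨bs, hG⟩ := hAlt
  refine ⟨bs + 2, bs + 1, by linarith, ?_⟩
  intro t ht x hx hxt
  have hx' : x ∈ Set.Ioi bs := Set.mem_Ioi.2 (by linarith)
  have htx : 0 ≤ t - x := by linarith
  have hfun : (fun y => h y t) = fun y => (t - y) * Real.log ((1 - β) * un n α L y) :=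
    funext fun y => hDef y t
  obtain ⟨e2, e3, e4⟩ := prod_derivs (isOpen_Ioi (a := bs)) hG.smooth t
  have e2' : deriv^[2] (fun y => (t - y) * Real.log ((1 - β) * un n α L y)) x
      = (t - x) * deriv^[2] (fun y => Real.log ((1 - β) * un n α L y)) x
        - 2 * deriv (fun y => Real.log ((1 - β) * un n α L y)) x := e2 hx'
  have e3' : deriv^[3] (fun y => (t - y) * Real.log ((1 - β) * un n α L y)) x
      = (t - x) * deriv^[3] (fun y => Real.log ((1 - β) * un n α L y)) x
        - 3 * deriv^[2] (fun y => Real.log ((1 - β) * un n α L y)) x := e3 hx'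
  have e4' : deriv^[4] (fun y => (t - y) * Real.log ((1 - β) * un n α L y)) x
      = (t - x) * deriv^[4] (fun y => Real.log ((1 - β) * un n α L y)) x
        - 4 * deriv^[3] (fun y => Real.log ((1 - β) * un n α L y)) x := e4 hx'
  have d1 := hG.d1 x hx'
  have d2 := hG.d2 x hx'
  have d3 := hG.d3 x hx'
  have d4 := hG.d4 x hx'
  rw [hfun, iteratedDeriv_eq_iterate, iteratedDeriv_eq_iterate, iteratedDeriv_eq_iterate,
    e2', e3', e4']
  refine ⟨?_, ?_, ?_⟩
  · nlinarith [mul_nonpos_of_nonneg_of_nonpos htx d2.le]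
  · nlinarith [mul_nonneg htx d3.le]
  · nlinarith [mul_nonpos_of_nonneg_of_nonpos htx d4.le]
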